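/- For a random variable Y = h(X̃)l(X̃) with X̃ ∼ Q, if ‖h‖_{p,Q} < ∞ for p > 2 and α ≥ 2p/(p−2), then E_Q[(h(X̃)l(X̃))²] ≤ ‖h‖²_{p,Q} · I_α(P‖Q)^{2/α}. -/

import Mathlib

open MeasureTheory

noncomputable def lr {X : Type*} [MeasurableSpace X] (P Q : Measure X) (x : X) : ℝ :=
  (P.rnDeriv Q x).toReal

noncomputable def Ialpha {X : Type*} [MeasurableSpace X] (P Q : Measure X) (α : ℝ) : ℝ :=
  ∫ x, lr P Q x ^ α ∂Q

noncomputable def pNorm {X : Type*} [MeasurableSpace X] (h : X → ℝ) (p : ℝ) (Q : Measure X) : ℝ :=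
  (∫ x, |h x| ^ p ∂Q) ^ (1 / p)

/-!
With `r = 2p/(p-2)` we have `1/2 = 1/p + 1/r`, so Hölder's inequality gives
`‖h l‖₂ ≤ ‖h‖_p ‖l‖_r`; since `Q` is a probability measure and `r ≤ α`, also `‖l‖_r ≤ ‖l‖_α`.
Squaring gives the bound, as `‖l‖_α = I_α(P‖Q)^{1/α}`.
-/

open scoped ENNReal

namespace MeasureTheory

variable {X : Type*} [MeasurableSpace X] {μ : Measure X}

lemma lpNorm_mul_le_mul_lpNorm {𝕜 : Type*} [NormedRing 𝕜] {p q r : ℝ≥0∞}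
    [ENNReal.HolderTriple p q r] {f g : X → 𝕜} (hf : MemLp f p μ) (hg : MemLp g q μ) :
    lpNorm (f * g) r μ ≤ lpNorm f p μ * lpNorm g q μ := by
  have hfg : eLpNorm (f * g) r μ ≤ eLpNorm f p μ * eLpNorm g q μ :=
    eLpNorm_smul_le_mul_eLpNorm (φ := f) (f := g) hg.1 hf.1
  rw [← toReal_eLpNorm hf.1, ← toReal_eLpNorm hg.1, ← toReal_eLpNorm (hf.1.mul hg.1),
    ← ENNReal.toReal_mul]
  exact ENNReal.toReal_mono (ENNReal.mul_ne_top hf.eLpNorm_ne_top hg.eLpNorm_ne_top) hfg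

lemma lpNorm_le_lpNorm_of_exponent_le [IsProbabilityMeasure μ] {E : Type*}
    [NormedAddCommGroup E] {p q : ℝ≥0∞} {f : X → E} (hpq : p ≤ q) (hf : MemLp f q μ) :
    lpNorm f p μ ≤ lpNorm f q μ := by
  rw [← toReal_eLpNorm hf.1, ← toReal_eLpNorm hf.1]
  exact ENNReal.toReal_mono hf.eLpNorm_ne_top (eLpNorm_le_eLpNorm_of_exponent_le hpq hf.1)

lemma memLp_ofReal_of_integrable_abs_rpow {f : X → ℝ} (hf : AEStronglyMeasurable f μ) {p : ℝ}
    (hp : 0 < p) (hint : Integrable (fun x => |f x| ^ p) μ) : MemLp f (ENNReal.ofReal p) μ := by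
  refine (integrable_norm_rpow_iff hf (by simpa using hp) ENNReal.ofReal_ne_top).1 ?_
  simpa only [Real.norm_eq_abs, ENNReal.toReal_ofReal hp.le] using hint

lemma integral_sq_eq_lpNorm_sq {f : X → ℝ} (hf : AEStronglyMeasurable f μ) :
    ∫ x, f x ^ 2 ∂μ = lpNorm f 2 μ ^ 2 := by
  have h2 := lpNorm_nnreal_eq_integral_norm_rpow (p := 2) two_ne_zero hf
  simp only [ENNReal.coe_ofNat, NNReal.coe_ofNat, Real.norm_eq_abs, sq_abs, Real.rpow_two] at h2
  rw [h2]
  exact_mod_cast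
    (Real.rpow_inv_natCast_pow (integral_nonneg fun x => sq_nonneg (f x)) two_ne_zero).symm

end MeasureTheory

section

variable {X : Type*} [MeasurableSpace X]

lemma pNorm_eq_lpNorm {Q : Measure X} {h : X → ℝ} (hh : AEStronglyMeasurable h Q) {p : ℝ}
    (hp : 0 < p) : pNorm h p Q = lpNorm h (ENNReal.ofReal p) Q := by
  rw [lpNorm_eq_integral_norm_rpow_toReal (by simpa using hp) ENNReal.ofReal_ne_top hh,
    ENNReal.toReal_ofReal hp.le, pNorm, one_div]
  simp only [Real.norm_eq_abs]

lemma measurable_lr (P Q : Measure X) : Measurable (lr P Q) :=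
  (Measure.measurable_rnDeriv P Q).ennreal_toReal

lemma lr_nonneg (P Q : Measure X) (x : X) : 0 ≤ lr P Q x :=
  ENNReal.toReal_nonneg

lemma Ialpha_nonneg (P Q : Measure X) (α : ℝ) : 0 ≤ Ialpha P Q α :=
  integral_nonneg fun x => Real.rpow_nonneg (lr_nonneg P Q x) α

lemma Ialpha_rpow_inv_eq_lpNorm (P Q : Measure X) {α : ℝ} (hα : 0 < α) :
    Ialpha P Q α ^ α⁻¹ = lpNorm (lr P Q) (ENNReal.ofReal α) Q := by
  rw [lpNorm_eq_integral_norm_rpow_toReal (by simpa using hα) ENNReal.ofReal_ne_top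
    (measurable_lr P Q).aestronglyMeasurable, ENNReal.toReal_ofReal hα.le, Ialpha]
  simp only [Real.norm_eq_abs, abs_of_nonneg (lr_nonneg P Q _)]

end

theorem second_moment_hl_le_general
    {X : Type*} [MeasurableSpace X]
    (P Q : Measure X) [IsProbabilityMeasure Q]
    (h : X → ℝ) (hmeas : Measurable h)
    (p : ℝ) (hp : 2 < p) (hpnorm : Integrable (fun x => |h x| ^ p) Q)
    (α : ℝ) (hα : 2 * p / (p - 2) ≤ α)
    (hI : Integrable (fun x => lr P Q x ^ α) Q) :
    ∫ x, (h x * lr P Q x) ^ 2 ∂Q ≤ pNorm h p Q ^ 2 * Ialpha P Q α ^ (2 / α) := by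
  set r := 2 * p / (p - 2) with hr_def
  have hr : 0 < r := div_pos (by linarith) (by linarith)
  have hα₀ : 0 < α := hr.trans_le hα
  have hholder : ENNReal.HolderTriple (.ofReal p) (.ofReal r) 2 := by
    have : Real.HolderTriple p r 2 :=
      ⟨by rw [hr_def]; field_simp [show p - 2 ≠ 0 by linarith]; ring, by linarith, hr⟩
    simpa using this.ennrealOfReal
  have hh : MemLp h (.ofReal p) Q :=
    memLp_ofReal_of_integrable_abs_rpow hmeas.aestronglyMeasurable (by linarith) hpnorm
  have hl : MemLp (lr P Q) (.ofReal α) Q :=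
    memLp_ofReal_of_integrable_abs_rpow (measurable_lr P Q).aestronglyMeasurable hα₀
      (by simpa only [abs_of_nonneg (lr_nonneg P Q _)] using hI)
  have hIα : Ialpha P Q α ^ (2 / α) = lpNorm (lr P Q) (.ofReal α) Q ^ 2 := by
    rw [← Ialpha_rpow_inv_eq_lpNorm P Q hα₀, ← Real.rpow_mul_natCast (Ialpha_nonneg P Q α)]
    ring_nf
  calc ∫ x, (h x * lr P Q x) ^ 2 ∂Q = lpNorm (h * lr P Q) 2 Q ^ 2 :=
        integral_sq_eq_lpNorm_sq (hmeas.mul (measurable_lr P Q)).aestronglyMeasurable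
    _ ≤ (lpNorm h (.ofReal p) Q * lpNorm (lr P Q) (.ofReal r) Q) ^ 2 :=
        pow_le_pow_left₀ lpNorm_nonneg
          (lpNorm_mul_le_mul_lpNorm hh (hl.mono_exponent (ENNReal.ofReal_le_ofReal hα))) 2
    _ ≤ (lpNorm h (.ofReal p) Q * lpNorm (lr P Q) (.ofReal α) Q) ^ 2 :=
        pow_le_pow_left₀ (mul_nonneg lpNorm_nonneg lpNorm_nonneg) (mul_le_mul_of_nonneg_left
          (lpNorm_le_lpNorm_of_exponent_le (ENNReal.ofReal_le_ofReal hα) hl) lpNorm_nonneg) 2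
    _ = pNorm h p Q ^ 2 * Ialpha P Q α ^ (2 / α) := by
        rw [pNorm_eq_lpNorm hmeas.aestronglyMeasurable (by linarith), hIα, mul_pow]

/-- Second-moment bound for `h(X̃)·l(X̃)`, `X̃ ∼ Q`, via Hölder's inequality:
`E_Q[(h·l)²] ≤ ‖h‖²_{p,Q} · I_α(P‖Q)^{2/α}`. -/
theorem second_moment_hl_le
    {X : Type*} [MeasurableSpace X]
    (P Q : Measure X) [IsProbabilityMeasure P] [IsProbabilityMeasure Q]
    (hPQ : P ≪ Q) (h : X → ℝ) (hmeas : Measurable h)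
    (p : ℝ) (hp : 2 < p) (hpnorm : Integrable (fun x => |h x| ^ p) Q)
    (α : ℝ) (hα : 2 * p / (p - 2) ≤ α)
    (hI : Integrable (fun x => lr P Q x ^ α) Q) :
    ∫ x, (h x * lr P Q x) ^ 2 ∂Q ≤ pNorm h p Q ^ 2 * Ialpha P Q α ^ (2 / α) :=
  second_moment_hl_le_general P Q h hmeas p hp hpnorm α hα hI
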